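/- arXiv:1910.01164 — 3 statements merged into one kernel-verified Lean document; each statement's English description precedes it below -/
import Mathlib

section
/- Let f = (f¹,…,f^{2n+1}) : ℝ^{2n+1} → ℝ^{2n+1} be a smooth contact map and g : ℝ^{2n+1} → ℝ smooth. Then for every j = 1,…,2n, W_j(g ∘ f) = Σ_{l=1}^{2n} ((W_l g) ∘ f)·W_j f^l. (Equivalently, the horizontal gradient satisfies ∇_ℍ(g ∘ f) = (horizontal Jacobian of f)ᵀ · (∇_ℍ g) ∘ f.) -/
open scoped BigOperators

/-- The index of the coordinate `w_j` (`j : Fin (2n)`) inside `Fin (2n+1)`. -/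
def embIdx (n : ℕ) (j : Fin (2*n)) : Fin (2*n+1) := ⟨j, by have := j.isLt; omega⟩

/-- The index of `w_j` for `j : Fin n` (the "first layer" indices `1,…,n`). -/
def loIdx (n : ℕ) (j : Fin n) : Fin (2*n) := ⟨j, by have := j.isLt; omega⟩

/-- The index of `w_{n+j}` for `j : Fin n` (the indices `n+1,…,2n`). -/
def hiIdx (n : ℕ) (j : Fin n) : Fin (2*n) := ⟨n + j, by have := j.isLt; omega⟩

/-- Partial derivative `∂_{w_i} g` at `p` (the last index `i = 2n` is the `t`-coordinate). -/
noncomputable def pderiv' (n : ℕ) (i : Fin (2*n+1))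
    (g : (Fin (2*n+1) → ℝ) → ℝ) (p : Fin (2*n+1) → ℝ) : ℝ :=
  fderiv ℝ g p (Pi.single i 1)

/-- The function `w̃_j`: `w̃_j(p) = p_{n+j}` for `1 ≤ j ≤ n` and `w̃_j(p) = −p_{j−n}`
for `n+1 ≤ j ≤ 2n` (here `j : Fin (2n)` is 0-based). -/
def wt (n : ℕ) (j : Fin (2*n)) (p : Fin (2*n+1) → ℝ) : ℝ :=
  if h : (j : ℕ) < n then p ⟨n + (j : ℕ), by omega⟩
  else - p ⟨(j : ℕ) - n, by have := j.isLt; omega⟩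

/-- The horizontal vector field `W_j g := ∂_{w_j} g − (1/2)·w̃_j·∂_t g`. -/
noncomputable def Wop (n : ℕ) (j : Fin (2*n))
    (g : (Fin (2*n+1) → ℝ) → ℝ) : (Fin (2*n+1) → ℝ) → ℝ :=
  fun p => pderiv' n (embIdx n j) g p - (1/2) * wt n j p * pderiv' n (Fin.last (2*n)) g p

/-- The vertical vector field `T g := ∂_t g`. -/
noncomputable def Tvert (n : ℕ)
    (g : (Fin (2*n+1) → ℝ) → ℝ) : (Fin (2*n+1) → ℝ) → ℝ :=
  fun p => pderiv' n (Fin.last (2*n)) g p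

/-- A map `f : ℝ^{2n+1} → ℝ^{2n+1}` is contact if for every `j = 1,…,2n`,
`W_j f^{2n+1} + (1/2)·Σ_{l=1}^{2n} (w̃_l ∘ f)·W_j f^l = 0` identically. -/
def IsContact (n : ℕ) (f : (Fin (2*n+1) → ℝ) → (Fin (2*n+1) → ℝ)) : Prop :=
  ∀ (j : Fin (2*n)) (p : Fin (2*n+1) → ℝ),
    Wop n j (fun q => f q (Fin.last (2*n))) p
      + (1/2) * ∑ l : Fin (2*n), wt n l (f p) * Wop n j (fun q => f q (embIdx n l)) p = 0

/-- Chain rule for `W_j` along a smooth contact map: for every `j = 1,…,2n`,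
`W_j(g ∘ f) = Σ_{l=1}^{2n} ((W_l g) ∘ f)·W_j f^l`. -/
theorem Wop_comp_contact (n : ℕ)
    (f : (Fin (2*n+1) → ℝ) → (Fin (2*n+1) → ℝ)) (g : (Fin (2*n+1) → ℝ) → ℝ)
    (hf : ContDiff ℝ (⊤ : ℕ∞) f) (hcontact : IsContact n f) (hg : ContDiff ℝ (⊤ : ℕ∞) g)
    (j : Fin (2*n)) (p : Fin (2*n+1) → ℝ) :
    Wop n j (g ∘ f) p =
      ∑ l : Fin (2*n), Wop n l g (f p) * Wop n j (fun q => f q (embIdx n l)) p := by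
  classical
  set v : Fin (2*n+1) → ℝ :=
    (Pi.single (embIdx n j) 1 : Fin (2*n+1) → ℝ)
      - ((1:ℝ)/2 * wt n j p) • (Pi.single (Fin.last (2*n)) 1 : Fin (2*n+1) → ℝ) with hv
  have hfd : DifferentiableAt ℝ f p := (hf.differentiable (by simp)).differentiableAt
  have hgd : DifferentiableAt ℝ g (f p) := (hg.differentiable (by simp)).differentiableAt
  have key : ∀ h : (Fin (2*n+1) → ℝ) → ℝ, Wop n j h p = fderiv ℝ h p v := by
    intro h
    simp only [Wop, pderiv', hv, map_sub, map_smul, smul_eq_mul]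
    try ring
  have hproj : ∀ i : Fin (2*n+1),
      fderiv ℝ (fun q => f q i) p v = (fderiv ℝ f p v) i := by
    intro i
    have heq : (fun q => f q i)
        = (ContinuousLinearMap.proj i : (Fin (2*n+1) → ℝ) →L[ℝ] ℝ) ∘ f := rfl
    rw [heq, fderiv_comp p ((ContinuousLinearMap.proj i).differentiableAt) hfd]
    simp [ContinuousLinearMap.fderiv]
  have hexp : ∀ u : Fin (2*n+1) → ℝ,
      fderiv ℝ g (f p) u = ∑ i, u i * fderiv ℝ g (f p) (Pi.single i 1) := by
    intro u
    have hu : u = ∑ i, u i • (Pi.single i 1 : Fin (2*n+1) → ℝ) := by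
      funext k
      simp [Finset.sum_apply, Pi.single_apply]
    conv_lhs => rw [hu]
    simp [smul_eq_mul]
  have hW : ∀ i : Fin (2*n+1), (fderiv ℝ f p v) i = Wop n j (fun q => f q i) p := by
    intro i; rw [key (fun q => f q i), hproj i]
  have hcomp : Wop n j (g ∘ f) p
      = ∑ i, Wop n j (fun q => f q i) p * pderiv' n i g (f p) := by
    rw [key (g ∘ f), fderiv_comp p hgd hfd]
    simp only [ContinuousLinearMap.comp_apply]
    rw [hexp]
    refine Finset.sum_congr rfl fun i _ => ?_
    rw [hW i]; rfl
  have hct := hcontact j p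
  have hlast : Wop n j (fun q => f q (Fin.last (2*n))) p
      = - ((1:ℝ)/2 * ∑ l : Fin (2*n),
          wt n l (f p) * Wop n j (fun q => f q (embIdx n l)) p) := by
    linarith [hct]
  have hcast : ∀ l : Fin (2*n), (Fin.castSucc l) = embIdx n l := fun l => rfl
  rw [hcomp, Fin.sum_univ_castSucc]
  simp only [hcast]
  rw [hlast, neg_mul, Finset.mul_sum, Finset.sum_mul, ← Finset.sum_neg_distrib,
    ← Finset.sum_add_distrib]
  refine Finset.sum_congr rfl fun l _ => ?_
  simp only [Wop]
  ring
end

section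
/- Let f = (f¹,…,f^{2n+1}) : ℝ^{2n+1} → ℝ^{2n+1} be a smooth contact map. Then for every j = 1,…,n one has T f^{2n+1} + (1/2)·Σ_{l=1}^{2n} (w̃_l ∘ f)·T f^l = Σ_{l=1}^{n} ( W_j f^l · W_{n+j} f^{n+l} − W_{n+j} f^l · W_j f^{n+l} ) =: λ(j,f); in particular the right-hand side is independent of j. -/
open scoped BigOperators

section helpers
variable {n : ℕ}

lemma contDiff_pderiv' {g : (Fin (2*n+1) → ℝ) → ℝ} (hg : ContDiff ℝ (⊤ : ℕ∞) g) (i : Fin (2*n+1)) :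
    ContDiff ℝ (⊤ : ℕ∞) (pderiv' n i g) :=
  (hg.fderiv_right (by simp)).clm_apply contDiff_const

lemma diffAt {g : (Fin (2*n+1) → ℝ) → ℝ} (hg : ContDiff ℝ (⊤ : ℕ∞) g) (p : Fin (2*n+1) → ℝ) :
    DifferentiableAt ℝ g p := (hg.differentiable (by simp)).differentiableAt

lemma pderiv'_zero (i : Fin (2*n+1)) (p) : pderiv' n i (fun _ => (0:ℝ)) p = 0 := by
  simp [pderiv']

lemma pderiv'_add {a b : (Fin (2*n+1) → ℝ) → ℝ} (ha : ContDiff ℝ (⊤ : ℕ∞) a) (hb : ContDiff ℝ (⊤ : ℕ∞) b)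
    (i : Fin (2*n+1)) (p) :
    pderiv' n i (fun q => a q + b q) p = pderiv' n i a p + pderiv' n i b p := by
  unfold pderiv'; rw [fderiv_fun_add (diffAt ha p) (diffAt hb p)]; simp

lemma pderiv'_neg {a : (Fin (2*n+1) → ℝ) → ℝ}
    (i : Fin (2*n+1)) (p) :
    pderiv' n i (fun q => -a q) p = - pderiv' n i a p := by
  unfold pderiv'; rw [fderiv_fun_neg]; simp

lemma pderiv'_sub {a b : (Fin (2*n+1) → ℝ) → ℝ} (ha : ContDiff ℝ (⊤ : ℕ∞) a) (hb : ContDiff ℝ (⊤ : ℕ∞) b)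
    (i : Fin (2*n+1)) (p) :
    pderiv' n i (fun q => a q - b q) p = pderiv' n i a p - pderiv' n i b p := by
  unfold pderiv'; rw [fderiv_fun_sub (diffAt ha p) (diffAt hb p)]; simp

lemma pderiv'_const_mul {a : (Fin (2*n+1) → ℝ) → ℝ} (ha : ContDiff ℝ (⊤ : ℕ∞) a) (c : ℝ)
    (i : Fin (2*n+1)) (p) :
    pderiv' n i (fun q => c * a q) p = c * pderiv' n i a p := by
  unfold pderiv'; rw [fderiv_const_mul (diffAt ha p)]; simp

lemma pderiv'_mul {a b : (Fin (2*n+1) → ℝ) → ℝ} (ha : ContDiff ℝ (⊤ : ℕ∞) a) (hb : ContDiff ℝ (⊤ : ℕ∞) b)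
    (i : Fin (2*n+1)) (p) :
    pderiv' n i (fun q => a q * b q) p = pderiv' n i a p * b p + a p * pderiv' n i b p := by
  unfold pderiv'; rw [fderiv_fun_mul (diffAt ha p) (diffAt hb p)]
  simp [smul_eq_mul]; ring

lemma pderiv'_sum {ι : Type*} [Fintype ι] {c : ι → (Fin (2*n+1) → ℝ) → ℝ}
    (hc : ∀ l, ContDiff ℝ (⊤ : ℕ∞) (c l)) (i : Fin (2*n+1)) (p) :
    pderiv' n i (fun q => ∑ l, c l q) p = ∑ l, pderiv' n i (c l) p := by
  unfold pderiv'; rw [fderiv_fun_sum (fun l _ => diffAt (hc l) p)]; simp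

lemma pderiv'_coord (i m : Fin (2*n+1)) (p) :
    pderiv' n i (fun q => q m) p = if m = i then 1 else 0 := by
  unfold pderiv'
  have : fderiv ℝ (fun q : Fin (2*n+1) → ℝ => q m) p
      = ContinuousLinearMap.proj (R := ℝ) (φ := fun _ : Fin (2*n+1) => ℝ) m :=
    (ContinuousLinearMap.proj (R := ℝ) (φ := fun _ : Fin (2*n+1) => ℝ) m).fderiv
  rw [this]
  simp [ContinuousLinearMap.proj_apply, Pi.single_apply]

lemma pderiv'_comm {g : (Fin (2*n+1) → ℝ) → ℝ} (hg : ContDiff ℝ (⊤ : ℕ∞) g)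
    (i k : Fin (2*n+1)) (p) :
    pderiv' n i (pderiv' n k g) p = pderiv' n k (pderiv' n i g) p := by
  have hd : ∀ y, HasFDerivAt g (fderiv ℝ g y) y := fun y => (diffAt hg y).hasFDerivAt
  have hsm : ContDiff ℝ (⊤ : ℕ∞) (fderiv ℝ g) := hg.fderiv_right (by simp)
  have h2 : HasFDerivAt (fderiv ℝ g) (fderiv ℝ (fderiv ℝ g) p) p :=
    ((hsm.differentiable (by simp)).differentiableAt).hasFDerivAt
  have key : ∀ (a : Fin (2*n+1)) (w : Fin (2*n+1) → ℝ),
      pderiv' n a (fun q => fderiv ℝ g q w) p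
        = (fderiv ℝ (fderiv ℝ g) p (Pi.single a 1)) w := by
    intro a w
    have h3 := (h2.clm_apply (hasFDerivAt_const w p)).fderiv
    unfold pderiv'
    rw [show (fun q => fderiv ℝ g q w) = (fun q => (fderiv ℝ g q) ((fun _ => w) q)) from rfl, h3]
    simp
  have e1 : pderiv' n i (pderiv' n k g) p
      = (fderiv ℝ (fderiv ℝ g) p (Pi.single i 1)) (Pi.single k 1) := key i _
  have e2 : pderiv' n k (pderiv' n i g) p
      = (fderiv ℝ (fderiv ℝ g) p (Pi.single k 1)) (Pi.single i 1) := key k _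
  rw [e1, e2, second_derivative_symmetric hd h2 _ _]

section helpers2
variable {n : ℕ}

lemma wt_lo (j : Fin n) : wt n (loIdx n j) = fun p => p (embIdx n (hiIdx n j)) := by
  funext p
  have h : ((loIdx n j : Fin (2*n)) : ℕ) < n := j.isLt
  simp only [wt, dif_pos h]
  congr 1
  all_goals (apply Fin.ext; simp [loIdx, embIdx, hiIdx]; try omega)

lemma wt_hi (j : Fin n) : wt n (hiIdx n j) = fun p => - p (embIdx n (loIdx n j)) := by
  funext p
  have h : ¬ ((hiIdx n j : Fin (2*n)) : ℕ) < n := by simp only [hiIdx]; omega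
  simp only [wt, dif_neg h]
  congr 2
  all_goals (apply Fin.ext; simp [loIdx, embIdx, hiIdx]; try omega)

lemma contDiff_coord (i : Fin (2*n+1)) : ContDiff ℝ (⊤ : ℕ∞) (fun p : Fin (2*n+1) → ℝ => p i) :=
  (ContinuousLinearMap.proj (R := ℝ) (φ := fun _ : Fin (2*n+1) => ℝ) i).contDiff

lemma contDiff_wt (l : Fin (2*n)) : ContDiff ℝ (⊤ : ℕ∞) (wt n l) := by
  rcases lt_or_ge (l : ℕ) n with h | h
  · have e : wt n l = fun p => p ⟨n + (l : ℕ), by omega⟩ := by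
      funext p; simp only [wt, dif_pos h]
    rw [e]; exact contDiff_coord _
  · have e : wt n l = fun p => - p ⟨(l : ℕ) - n, by have := l.isLt; omega⟩ := by
      funext p; simp only [wt, dif_neg (not_lt.2 h)]
    rw [e]; exact (contDiff_coord _).neg

lemma contDiff_Wop {g : (Fin (2*n+1) → ℝ) → ℝ} (hg : ContDiff ℝ (⊤ : ℕ∞) g) (a : Fin (2*n)) :
    ContDiff ℝ (⊤ : ℕ∞) (Wop n a g) := by
  unfold Wop
  exact (contDiff_pderiv' hg _).sub
    ((contDiff_const.mul (contDiff_wt a)).mul (contDiff_pderiv' hg _))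

lemma Wop_zero (a : Fin (2*n)) (p) : Wop n a (fun _ => (0:ℝ)) p = 0 := by
  unfold Wop; rw [pderiv'_zero, pderiv'_zero]; ring

lemma Wop_add {u v : (Fin (2*n+1) → ℝ) → ℝ} (hu : ContDiff ℝ (⊤ : ℕ∞) u) (hv : ContDiff ℝ (⊤ : ℕ∞) v)
    (a : Fin (2*n)) (p) :
    Wop n a (fun q => u q + v q) p = Wop n a u p + Wop n a v p := by
  unfold Wop; rw [pderiv'_add hu hv, pderiv'_add hu hv]; ring

lemma Wop_neg {u : (Fin (2*n+1) → ℝ) → ℝ} (a : Fin (2*n)) (p) :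
    Wop n a (fun q => -u q) p = - Wop n a u p := by
  unfold Wop; rw [pderiv'_neg, pderiv'_neg]; ring

lemma Wop_const_mul {u : (Fin (2*n+1) → ℝ) → ℝ} (hu : ContDiff ℝ (⊤ : ℕ∞) u) (c : ℝ)
    (a : Fin (2*n)) (p) :
    Wop n a (fun q => c * u q) p = c * Wop n a u p := by
  unfold Wop; rw [pderiv'_const_mul hu, pderiv'_const_mul hu]; ring

lemma Wop_mul {u v : (Fin (2*n+1) → ℝ) → ℝ} (hu : ContDiff ℝ (⊤ : ℕ∞) u) (hv : ContDiff ℝ (⊤ : ℕ∞) v)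
    (a : Fin (2*n)) (p) :
    Wop n a (fun q => u q * v q) p = Wop n a u p * v p + u p * Wop n a v p := by
  unfold Wop; rw [pderiv'_mul hu hv, pderiv'_mul hu hv]; ring

lemma Wop_sum {ι : Type*} [Fintype ι] {c : ι → (Fin (2*n+1) → ℝ) → ℝ}
    (hc : ∀ l, ContDiff ℝ (⊤ : ℕ∞) (c l)) (a : Fin (2*n)) (p) :
    Wop n a (fun q => ∑ l, c l q) p = ∑ l, Wop n a (c l) p := by
  unfold Wop; rw [pderiv'_sum hc, pderiv'_sum hc, Finset.mul_sum, ← Finset.sum_sub_distrib]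

lemma pderiv'_Wop {u : (Fin (2*n+1) → ℝ) → ℝ} (hu : ContDiff ℝ (⊤ : ℕ∞) u)
    (a : Fin (2*n)) (i : Fin (2*n+1)) (p) :
    pderiv' n i (Wop n a u) p
      = pderiv' n i (pderiv' n (embIdx n a) u) p
        - (1/2) * (pderiv' n i (wt n a) p * pderiv' n (Fin.last (2*n)) u p
            + wt n a p * pderiv' n i (pderiv' n (Fin.last (2*n)) u) p) := by
  have h1 : ContDiff ℝ (⊤ : ℕ∞) (fun q => (1/2 : ℝ) * wt n a q) := contDiff_const.mul (contDiff_wt a)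
  have h2 : ContDiff ℝ (⊤ : ℕ∞) (pderiv' n (Fin.last (2*n)) u) := contDiff_pderiv' hu _
  have e : Wop n a u = fun q => pderiv' n (embIdx n a) u q
      - ((1/2 : ℝ) * wt n a q) * pderiv' n (Fin.last (2*n)) u q := by
    funext q; simp [Wop]
  rw [e, pderiv'_sub (contDiff_pderiv' hu _) (h1.mul h2),
    pderiv'_mul h1 h2, pderiv'_const_mul (contDiff_wt a)]
  ring

lemma Wop_comm {u : (Fin (2*n+1) → ℝ) → ℝ} (hu : ContDiff ℝ (⊤ : ℕ∞) u) (j : Fin n) (p) :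
    Wop n (hiIdx n j) (Wop n (loIdx n j) u) p - Wop n (loIdx n j) (Wop n (hiIdx n j) u) p
      = - Tvert n u p := by
  have hane : embIdx n (loIdx n j) ≠ Fin.last (2*n) := by
    simp [Fin.ext_iff, embIdx, loIdx, Fin.last]; omega
  have hbne : embIdx n (hiIdx n j) ≠ Fin.last (2*n) := by
    simp [Fin.ext_iff, embIdx, hiIdx, Fin.last]; have := j.isLt; omega
  have expand : ∀ (c : Fin (2*n)) (v : (Fin (2*n+1) → ℝ) → ℝ),
      Wop n c v p = pderiv' n (embIdx n c) v p
        - (1/2) * wt n c p * pderiv' n (Fin.last (2*n)) v p := fun c v => rfl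
  rw [expand _ (Wop n (loIdx n j) u), expand _ (Wop n (hiIdx n j) u)]
  rw [pderiv'_Wop hu, pderiv'_Wop hu, pderiv'_Wop hu, pderiv'_Wop hu]
  -- derivatives of wt coefficients
  have dlo : ∀ i p', pderiv' n i (wt n (loIdx n j)) p'
      = if embIdx n (hiIdx n j) = i then 1 else 0 := by
    intro i p'; rw [wt_lo j]; exact pderiv'_coord _ _ _
  have dhi : ∀ i p', pderiv' n i (wt n (hiIdx n j)) p'
      = - (if embIdx n (loIdx n j) = i then 1 else 0) := by
    intro i p'; rw [wt_hi j]
    rw [show (fun p : Fin (2*n+1) → ℝ => -p (embIdx n (loIdx n j)))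
        = (fun p : Fin (2*n+1) → ℝ => -(fun q : Fin (2*n+1) → ℝ => q (embIdx n (loIdx n j))) p) from rfl,
      pderiv'_neg, pderiv'_coord]
  have vlo : wt n (loIdx n j) p = p (embIdx n (hiIdx n j)) := congrFun (wt_lo j) p
  have vhi : wt n (hiIdx n j) p = - p (embIdx n (loIdx n j)) := congrFun (wt_hi j) p
  simp only [dlo, dhi, vlo, vhi]
  simp only [if_pos rfl, if_neg hane, if_neg hbne, eq_self_iff_true, if_true]
  have c1 := pderiv'_comm hu (embIdx n (hiIdx n j)) (embIdx n (loIdx n j)) p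
  have c2 := pderiv'_comm hu (Fin.last (2*n)) (embIdx n (loIdx n j)) p
  have c3 := pderiv'_comm hu (Fin.last (2*n)) (embIdx n (hiIdx n j)) p
  unfold Tvert
  rw [c1, c2, c3]
  ring

section helpers3
variable {n : ℕ}

lemma sum_split (h : Fin (2*n) → ℝ) :
    ∑ l, h l = ∑ m : Fin n, h (loIdx n m) + ∑ m : Fin n, h (hiIdx n m) := by
  rw [← Equiv.sum_comp (finSumFinEquiv.trans (finCongr (show n + n = 2*n by omega))) h,
    Fintype.sum_sum_type]
  congr 1 <;> exact Finset.sum_congr rfl (fun m _ => congrArg h (Fin.ext (by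
    simp [loIdx, hiIdx])))

end helpers3

/-- For a smooth contact map `f`, for every `j = 1,…,n`,
`T f^{2n+1} + (1/2)·Σ_{l=1}^{2n} (w̃_l ∘ f)·T f^l
  = Σ_{l=1}^{n} ( W_j f^l · W_{n+j} f^{n+l} − W_{n+j} f^l · W_j f^{n+l} ) =: λ(j,f)`;
in particular the right-hand side is independent of `j`. -/
theorem T_last_eq_lambda (n : ℕ)
    (f : (Fin (2*n+1) → ℝ) → (Fin (2*n+1) → ℝ))
    (hf : ContDiff ℝ (⊤ : ℕ∞) f) (hcontact : IsContact n f)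
    (j : Fin n) (p : Fin (2*n+1) → ℝ) :
    Tvert n (fun q => f q (Fin.last (2*n))) p
        + (1/2) * ∑ l : Fin (2*n), wt n l (f p) * Tvert n (fun q => f q (embIdx n l)) p
      = ∑ l : Fin n,
          (Wop n (loIdx n j) (fun q => f q (embIdx n (loIdx n l))) p
              * Wop n (hiIdx n j) (fun q => f q (embIdx n (hiIdx n l))) p
            - Wop n (hiIdx n j) (fun q => f q (embIdx n (loIdx n l))) p
              * Wop n (loIdx n j) (fun q => f q (embIdx n (hiIdx n l))) p) := by
  classical
  have hgl : ∀ i : Fin (2*n+1), ContDiff ℝ (⊤ : ℕ∞) (fun q => f q i) := fun i =>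
    (ContinuousLinearMap.proj (R := ℝ) (φ := fun _ : Fin (2*n+1) => ℝ) i).contDiff.comp hf
  have hwtf : ∀ l : Fin (2*n), ContDiff ℝ (⊤ : ℕ∞) (fun q => wt n l (f q)) := fun l =>
    (contDiff_wt l).comp hf
  -- expansion of the derivative of the contact identity
  have expand : ∀ a b : Fin (2*n),
      Wop n b (Wop n a (fun q => f q (Fin.last (2*n)))) p
        + (1/2) * ∑ l : Fin (2*n),
            (Wop n b (fun q => wt n l (f q)) p * Wop n a (fun q => f q (embIdx n l)) p
              + wt n l (f p) * Wop n b (Wop n a (fun q => f q (embIdx n l))) p) = 0 := by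
    intro a b
    have hzero : (fun q => Wop n a (fun q' => f q' (Fin.last (2*n))) q
        + (1/2) * ∑ l : Fin (2*n), wt n l (f q) * Wop n a (fun q' => f q' (embIdx n l)) q)
        = (fun _ => (0:ℝ)) := funext (hcontact a)
    have hterm : ∀ l : Fin (2*n), ContDiff ℝ (⊤ : ℕ∞)
        (fun q => wt n l (f q) * Wop n a (fun q' => f q' (embIdx n l)) q) := fun l =>
      (hwtf l).mul (contDiff_Wop (hgl _) a)
    have hsum : ContDiff ℝ (⊤ : ℕ∞)
        (fun q => ∑ l : Fin (2*n), wt n l (f q) * Wop n a (fun q' => f q' (embIdx n l)) q) :=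
      ContDiff.sum (fun l _ => hterm l)
    have h0 : Wop n b (fun q => Wop n a (fun q' => f q' (Fin.last (2*n))) q
        + (1/2) * ∑ l : Fin (2*n), wt n l (f q) * Wop n a (fun q' => f q' (embIdx n l)) q) p
        = 0 := by rw [hzero]; exact Wop_zero b p
    have hmul : ∀ l : Fin (2*n),
        Wop n b (fun q => wt n l (f q) * Wop n a (fun q' => f q' (embIdx n l)) q) p
          = Wop n b (fun q => wt n l (f q)) p * Wop n a (fun q' => f q' (embIdx n l)) p
            + wt n l (f p) * Wop n b (Wop n a (fun q' => f q' (embIdx n l))) p := fun l =>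
      Wop_mul (hwtf l) (contDiff_Wop (hgl _) a) b p
    rw [Wop_add (contDiff_Wop (hgl _) a) (contDiff_const.mul hsum),
      Wop_const_mul hsum, Wop_sum hterm] at h0
    simp only [hmul] at h0
    exact h0
  have E1 := expand (loIdx n j) (hiIdx n j)
  have E2 := expand (hiIdx n j) (loIdx n j)
  rw [Finset.sum_add_distrib] at E1 E2
  -- commutators
  have cgt : Wop n (hiIdx n j) (Wop n (loIdx n j) (fun q => f q (Fin.last (2*n)))) p
      - Wop n (loIdx n j) (Wop n (hiIdx n j) (fun q => f q (Fin.last (2*n)))) p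
      = - Tvert n (fun q => f q (Fin.last (2*n))) p := Wop_comm (hgl _) j p
  have hSA : ∑ l : Fin (2*n), wt n l (f p)
        * Wop n (hiIdx n j) (Wop n (loIdx n j) (fun q => f q (embIdx n l))) p
      = ∑ l : Fin (2*n), wt n l (f p)
          * Wop n (loIdx n j) (Wop n (hiIdx n j) (fun q => f q (embIdx n l))) p
        - ∑ l : Fin (2*n), wt n l (f p) * Tvert n (fun q => f q (embIdx n l)) p := by
    rw [← Finset.sum_sub_distrib]
    refine Finset.sum_congr rfl (fun l _ => ?_)
    have hc := Wop_comm (hgl (embIdx n l)) j p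
    have hX : Wop n (hiIdx n j) (Wop n (loIdx n j) (fun q => f q (embIdx n l))) p
        = Wop n (loIdx n j) (Wop n (hiIdx n j) (fun q => f q (embIdx n l))) p
          - Tvert n (fun q => f q (embIdx n l)) p := by linarith
    rw [hX]; ring
  -- identification of the w̃∘f factors
  have wtfl : ∀ (c : Fin (2*n)) (m : Fin n),
      Wop n c (fun q => wt n (loIdx n m) (f q)) p
        = Wop n c (fun q => f q (embIdx n (hiIdx n m))) p := by
    intro c m; congr 1; funext q; exact congrFun (wt_lo m) (f q)
  have wtfh : ∀ (c : Fin (2*n)) (m : Fin n),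
      Wop n c (fun q => wt n (hiIdx n m) (f q)) p
        = - Wop n c (fun q => f q (embIdx n (loIdx n m))) p := by
    intro c m
    rw [show (fun q => wt n (hiIdx n m) (f q))
        = (fun q => -(fun q' => f q' (embIdx n (loIdx n m))) q) from
      funext (fun q => congrFun (wt_hi m) (f q))]
    exact Wop_neg c p
  -- the cross terms give 2λ
  have hcross : (∑ l : Fin (2*n), Wop n (hiIdx n j) (fun q => wt n l (f q)) p
        * Wop n (loIdx n j) (fun q => f q (embIdx n l)) p)
      - (∑ l : Fin (2*n), Wop n (loIdx n j) (fun q => wt n l (f q)) p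
        * Wop n (hiIdx n j) (fun q => f q (embIdx n l)) p)
      = 2 * ∑ l : Fin n,
          (Wop n (loIdx n j) (fun q => f q (embIdx n (loIdx n l))) p
              * Wop n (hiIdx n j) (fun q => f q (embIdx n (hiIdx n l))) p
            - Wop n (hiIdx n j) (fun q => f q (embIdx n (loIdx n l))) p
              * Wop n (loIdx n j) (fun q => f q (embIdx n (hiIdx n l))) p) := by
    rw [sum_split, sum_split, Finset.mul_sum]
    simp only [wtfl, wtfh]
    rw [← Finset.sum_add_distrib, ← Finset.sum_add_distrib, ← Finset.sum_sub_distrib]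
    exact Finset.sum_congr rfl (fun m _ => by ring)
  linarith [E1, E2, cgt, hSA, hcross]
end helpers2
end helpers
end

section
/- Let f = (f¹,…,f^{2n+1}) : ℝ^{2n+1} → ℝ^{2n+1} be a smooth contact map and g : ℝ^{2n+1} → ℝ smooth. Then for all i, j = 1,…,2n: W_j W_i (g ∘ f) = Σ_{l=1}^{2n} Σ_{h=1}^{2n} ((W_h W_l g) ∘ f)·W_j f^h·W_i f^l + Σ_{l=1}^{2n} ((W_l g) ∘ f)·W_j W_i f^l. -/
open scoped BigOperators

namespace WopAux

variable {n : ℕ}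

/-- The horizontal vector (direction) for `W_j` at a point `p`. -/
noncomputable def Vvec (n : ℕ) (j : Fin (2*n)) (p : Fin (2*n+1) → ℝ) :
    Fin (2*n+1) → ℝ :=
  (Pi.single (embIdx n j) 1 : Fin (2*n+1) → ℝ)
    - ((1/2) * wt n j p) • (Pi.single (Fin.last (2*n)) 1 : Fin (2*n+1) → ℝ)

lemma Wop_eq_fderiv (j : Fin (2*n)) (g : (Fin (2*n+1) → ℝ) → ℝ) (p : Fin (2*n+1) → ℝ) :
    Wop n j g p = fderiv ℝ g p (Vvec n j p) := by
  simp only [Wop, pderiv', Vvec, map_sub, map_smul, smul_eq_mul]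

lemma contDiff_wt (j : Fin (2*n)) : ContDiff ℝ (⊤ : ℕ∞) (wt n j) := by
  by_cases h : (j : ℕ) < n
  · have he : wt n j = fun p : Fin (2*n+1) → ℝ => p ⟨n + (j : ℕ), by omega⟩ := by
      funext q; simp [wt, h]
    rw [he]; exact contDiff_apply ℝ ℝ _
  · have he : wt n j = fun p : Fin (2*n+1) → ℝ =>
        - p ⟨(j : ℕ) - n, by have := j.isLt; omega⟩ := by
      funext q; simp [wt, h]
    rw [he]; exact (contDiff_apply ℝ ℝ _).neg

lemma contDiff_pderiv' (i : Fin (2*n+1)) {g : (Fin (2*n+1) → ℝ) → ℝ}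
    (hg : ContDiff ℝ (⊤ : ℕ∞) g) : ContDiff ℝ (⊤ : ℕ∞) (pderiv' n i g) :=
  (ContinuousLinearMap.apply ℝ ℝ
      (Pi.single i 1 : Fin (2*n+1) → ℝ)).contDiff.comp
    (hg.fderiv_right (m := (⊤ : ℕ∞)) (by simp))

lemma contDiff_Wop (j : Fin (2*n)) {g : (Fin (2*n+1) → ℝ) → ℝ}
    (hg : ContDiff ℝ (⊤ : ℕ∞) g) : ContDiff ℝ (⊤ : ℕ∞) (Wop n j g) :=
  (contDiff_pderiv' _ hg).sub
    ((contDiff_const.mul (contDiff_wt j)).mul (contDiff_pderiv' _ hg))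

lemma Wop_mul (j : Fin (2*n)) {a b : (Fin (2*n+1) → ℝ) → ℝ} {p : Fin (2*n+1) → ℝ}
    (ha : DifferentiableAt ℝ a p) (hb : DifferentiableAt ℝ b p) :
    Wop n j (fun q => a q * b q) p = Wop n j a p * b p + a p * Wop n j b p := by
  simp only [Wop_eq_fderiv, fderiv_fun_mul ha hb, ContinuousLinearMap.add_apply,
    ContinuousLinearMap.coe_smul', Pi.smul_apply, smul_eq_mul]
  ring

lemma Wop_sum (j : Fin (2*n)) {F : Fin (2*n) → (Fin (2*n+1) → ℝ) → ℝ}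
    {p : Fin (2*n+1) → ℝ} (hF : ∀ l, DifferentiableAt ℝ (F l) p) :
    Wop n j (fun q => ∑ l : Fin (2*n), F l q) p = ∑ l : Fin (2*n), Wop n j (F l) p := by
  simp only [Wop_eq_fderiv]
  rw [fderiv_fun_sum (fun l _ => hF l)]
  simp [ContinuousLinearMap.sum_apply]

/-- Chain rule for one horizontal derivative of the component `f^m`. -/
lemma Wop_component (i : Fin (2*n)) {f : (Fin (2*n+1) → ℝ) → (Fin (2*n+1) → ℝ)}
    (hf : ContDiff ℝ (⊤ : ℕ∞) f) (m : Fin (2*n+1)) (p : Fin (2*n+1) → ℝ) :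
    Wop n i (fun q => f q m) p = fderiv ℝ f p (Vvec n i p) m := by
  rw [Wop_eq_fderiv]
  have h : (fun q => f q m)
      = (ContinuousLinearMap.proj m : ((Fin (2*n+1) → ℝ)) →L[ℝ] ℝ) ∘ f := rfl
  rw [h, ((ContinuousLinearMap.proj m).hasFDerivAt.comp p
      ((hf.differentiable (by simp)) p).hasFDerivAt).fderiv]
  rfl

lemma embIdx_eq_castSucc (l : Fin (2*n)) : embIdx n l = Fin.castSucc l := rfl

/-- First-order chain rule for `W_i` along a contact map. -/
lemma Wop_comp {f : (Fin (2*n+1) → ℝ) → (Fin (2*n+1) → ℝ)}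
    {g : (Fin (2*n+1) → ℝ) → ℝ}
    (hf : ContDiff ℝ (⊤ : ℕ∞) f) (hc : IsContact n f) (hg : ContDiff ℝ (⊤ : ℕ∞) g)
    (i : Fin (2*n)) (p : Fin (2*n+1) → ℝ) :
    Wop n i (g ∘ f) p
      = ∑ l : Fin (2*n), Wop n l g (f p) * Wop n i (fun q => f q (embIdx n l)) p := by
  have hfd : DifferentiableAt ℝ f p := (hf.differentiable (by simp)) p
  have hgd : DifferentiableAt ℝ g (f p) := (hg.differentiable (by simp)) (f p)
  -- expand the composition
  have hexp : Wop n i (g ∘ f) p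
      = ∑ m : Fin (2*n+1), pderiv' n m g (f p) * fderiv ℝ f p (Vvec n i p) m := by
    rw [Wop_eq_fderiv, fderiv_comp p hgd hfd]
    simp only [ContinuousLinearMap.coe_comp', Function.comp_apply]
    set w := fderiv ℝ f p (Vvec n i p) with hw
    conv_lhs => rw [← Finset.univ_sum_single w, map_sum]
    refine Finset.sum_congr rfl fun m _ => ?_
    have : (Pi.single m (w m) : Fin (2*n+1) → ℝ)
        = w m • (Pi.single m 1 : Fin (2*n+1) → ℝ) := by
      rw [← Pi.single_smul, smul_eq_mul, mul_one]
    rw [this, map_smul, smul_eq_mul, pderiv']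
    ring
  rw [hexp, Fin.sum_univ_castSucc (n := 2*n)]
  have hcomp : ∀ m : Fin (2*n+1),
      fderiv ℝ f p (Vvec n i p) m = Wop n i (fun q => f q m) p :=
    fun m => (Wop_component i hf m p).symm
  simp only [hcomp]
  -- abbreviations
  set b := pderiv' n (Fin.last (2*n)) g (f p) with hb
  have hclast := hc i p
  have hlast : Wop n i (fun q => f q (Fin.last (2*n))) p
      = -((1/2) * ∑ l : Fin (2*n),
          wt n l (f p) * Wop n i (fun q => f q (embIdx n l)) p) := by
    linarith [hclast]
  have hWg : ∀ l : Fin (2*n), Wop n l g (f p)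
      = pderiv' n (embIdx n l) g (f p) - (1/2) * wt n l (f p) * b := fun l => rfl
  simp only [hWg, embIdx_eq_castSucc, sub_mul]
  rw [Finset.sum_sub_distrib, hlast]
  have : ∑ l : Fin (2*n), (1/2) * wt n l (f p) * b
        * Wop n i (fun q => f q (Fin.castSucc l)) p
      = b * ((1/2) * ∑ l : Fin (2*n),
          wt n l (f p) * Wop n i (fun q => f q (Fin.castSucc l)) p) := by
    rw [Finset.mul_sum, Finset.mul_sum]
    exact Finset.sum_congr rfl fun l _ => by ring
  simp only [embIdx_eq_castSucc] at this ⊢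
  rw [this]
  ring

end WopAux

open WopAux

/-- Second-order chain rule along a smooth contact map: for all `i, j = 1,…,2n`,
`W_j W_i (g ∘ f) = Σ_{l,h=1}^{2n} ((W_h W_l g) ∘ f)·W_j f^h·W_i f^l
  + Σ_{l=1}^{2n} ((W_l g) ∘ f)·W_j W_i f^l`. -/
theorem Wop_Wop_comp (n : ℕ)
    (f : (Fin (2*n+1) → ℝ) → (Fin (2*n+1) → ℝ)) (g : (Fin (2*n+1) → ℝ) → ℝ)
    (hf : ContDiff ℝ (⊤ : ℕ∞) f) (hcontact : IsContact n f) (hg : ContDiff ℝ (⊤ : ℕ∞) g)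
    (i j : Fin (2*n)) (p : Fin (2*n+1) → ℝ) :
    Wop n j (Wop n i (g ∘ f)) p =
      (∑ l : Fin (2*n), ∑ h : Fin (2*n),
          Wop n h (Wop n l g) (f p)
            * Wop n j (fun q => f q (embIdx n h)) p
            * Wop n i (fun q => f q (embIdx n l)) p)
        + ∑ l : Fin (2*n),
            Wop n l g (f p) * Wop n j (Wop n i (fun q => f q (embIdx n l))) p := by
  -- basic smoothness facts
  have hfl : ∀ m : Fin (2*n+1), ContDiff ℝ (⊤ : ℕ∞) (fun q => f q m) := fun m =>
    (contDiff_apply ℝ ℝ m).comp hf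
  have hA : ∀ l : Fin (2*n), ContDiff ℝ (⊤ : ℕ∞) (fun q => Wop n l g (f q)) := fun l =>
    (contDiff_Wop l hg).comp hf
  have hB : ∀ l : Fin (2*n),
      ContDiff ℝ (⊤ : ℕ∞) (Wop n i (fun q => f q (embIdx n l))) := fun l =>
    contDiff_Wop i (hfl _)
  -- first-order rewrite
  have key : Wop n i (g ∘ f)
      = fun q => ∑ l : Fin (2*n),
          Wop n l g (f q) * Wop n i (fun q' => f q' (embIdx n l)) q :=
    funext fun q => Wop_comp hf hcontact hg i q
  rw [key]
  rw [Wop_sum j (fun l => ((hA l).mul (hB l)).differentiable (by simp) |>.differentiableAt)]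
  have step : ∀ l : Fin (2*n),
      Wop n j (fun q => Wop n l g (f q) * Wop n i (fun q' => f q' (embIdx n l)) q) p
        = (∑ h : Fin (2*n), Wop n h (Wop n l g) (f p)
              * Wop n j (fun q => f q (embIdx n h)) p
              * Wop n i (fun q => f q (embIdx n l)) p)
          + Wop n l g (f p) * Wop n j (Wop n i (fun q => f q (embIdx n l))) p := by
    intro l
    rw [Wop_mul j ((hA l).differentiable (by simp) p) ((hB l).differentiable (by simp) p)]
    have hchain : Wop n j (fun q => Wop n l g (f q)) p
        = ∑ h : Fin (2*n), Wop n h (Wop n l g) (f p)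
            * Wop n j (fun q => f q (embIdx n h)) p :=
      Wop_comp hf hcontact (contDiff_Wop l hg) j p
    rw [hchain, Finset.sum_mul]
  rw [Finset.sum_congr rfl fun l _ => step l, Finset.sum_add_distrib]
end
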